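/- Let (u,n,v) be a classical solution of the reduced Klein–Gordon–Zakharov system (KGZSv), let φ ∈ C²(ℝ) be bounded together with its first two derivatives, and let λ, μ : ℝ → ℝ be C¹ functions with λ(t) > 0. Define J(t) = ½∫_ℝ φ((x+μ(t))/λ(t)) ( (∂ₓu)² + u² + (∂ₜu)² + ½v² + ½n² + n u² )(t,x) dx. Then, writing X = (x+μ(t))/λ(t) and G = (∂ₓu)² + u² + (∂ₜu)² + ½v² + ½n² + n u², dJ/dt(t) = (1/λ(t)) ∫_ℝ φ'(X) ( ½vn + ½v u² − (∂ₜu)(∂ₓu) )(t,x) dx + (μ'(t)/(2λ(t))) ∫_ℝ φ'(X) G(t,x) dx − (λ'(t)/(2λ(t))) ∫_ℝ φ'(X)·X·G(t,x) dx. -/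

import Mathlib

open MeasureTheory Filter Real Set

noncomputable section

/-- Partial derivative in the space variable `x` (real-valued). -/
def pdR (f : ℝ → ℝ → ℝ) : ℝ → ℝ → ℝ := fun t x => deriv (fun y => f t y) x

/-- Partial derivative in the time variable `t` (real-valued). -/
def pdtR (f : ℝ → ℝ → ℝ) : ℝ → ℝ → ℝ := fun t x => deriv (fun s => f s x) t

/-- `f` and all its derivatives are Schwartz in `x`, locally uniformly in `t`. -/
def SchwartzLocR (f : ℝ → ℝ → ℝ) : Prop :=
  ∀ j k l : ℕ, ∀ T : ℝ, ∃ C : ℝ, ∀ t x : ℝ, |t| ≤ T →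
    |x| ^ k * |pdR^[l] (pdtR^[j] f) t x| ≤ C

/-- Classical solution of the reduced Klein–Gordon–Zakharov system (KGZSv):
`uₜₜ - u_xx + u = -n u`, `nₜ + v_x = 0`, `vₜ + (n + u²)_x = 0`. -/
structure IsKGZSolution (u n v : ℝ → ℝ → ℝ) : Prop where
  smooth_u : ContDiff ℝ (⊤ : ℕ∞) fun p : ℝ × ℝ => u p.1 p.2
  smooth_n : ContDiff ℝ (⊤ : ℕ∞) fun p : ℝ × ℝ => n p.1 p.2
  smooth_v : ContDiff ℝ (⊤ : ℕ∞) fun p : ℝ × ℝ => v p.1 p.2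
  schwartz_u : SchwartzLocR u
  schwartz_n : SchwartzLocR n
  schwartz_v : SchwartzLocR v
  eq_u : ∀ t x : ℝ, pdtR (pdtR u) t x - pdR (pdR u) t x + u t x = -(n t x * u t x)
  eq_n : ∀ t x : ℝ, pdtR n t x + pdR v t x = 0
  eq_v : ∀ t x : ℝ, pdtR v t x + pdR (fun s y => n s y + (u s y) ^ 2) t x = 0

namespace KGZaux

/-- uncurried version -/
def unc (f : ℝ → ℝ → ℝ) : ℝ × ℝ → ℝ := fun p => f p.1 p.2

variable {f : ℝ → ℝ → ℝ}

theorem hasDerivAt_x (hf : ContDiff ℝ (⊤ : ℕ∞) (unc f)) (t x : ℝ) :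
    HasDerivAt (fun y => f t y) (fderiv ℝ (unc f) (t, x) (0, 1)) x := by
  have h1 : HasDerivAt (fun y : ℝ => ((t, y) : ℝ × ℝ)) (0, 1) x :=
    (hasDerivAt_const x t).prodMk (hasDerivAt_id x)
  have h2 := (hf.differentiable (by simp) (t, x)).hasFDerivAt
  exact h2.comp_hasDerivAt x h1

theorem hasDerivAt_t (hf : ContDiff ℝ (⊤ : ℕ∞) (unc f)) (t x : ℝ) :
    HasDerivAt (fun s => f s x) (fderiv ℝ (unc f) (t, x) (1, 0)) t := by
  have h1 : HasDerivAt (fun s : ℝ => ((s, x) : ℝ × ℝ)) (1, 0) t :=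
    (hasDerivAt_id t).prodMk (hasDerivAt_const t x)
  have h2 := (hf.differentiable (by simp) (t, x)).hasFDerivAt
  exact h2.comp_hasDerivAt t h1

theorem pdR_eq (hf : ContDiff ℝ (⊤ : ℕ∞) (unc f)) (t x : ℝ) :
    pdR f t x = fderiv ℝ (unc f) (t, x) (0, 1) := (hasDerivAt_x hf t x).deriv

theorem pdtR_eq (hf : ContDiff ℝ (⊤ : ℕ∞) (unc f)) (t x : ℝ) :
    pdtR f t x = fderiv ℝ (unc f) (t, x) (1, 0) := (hasDerivAt_t hf t x).deriv

theorem contDiff_unc_apply (hf : ContDiff ℝ (⊤ : ℕ∞) (unc f)) (w : ℝ × ℝ) :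
    ContDiff ℝ (⊤ : ℕ∞) (fun p : ℝ × ℝ => fderiv ℝ (unc f) p w) :=
  (hf.fderiv_right (by simp)).clm_apply contDiff_const

theorem smooth_pdR (hf : ContDiff ℝ (⊤ : ℕ∞) (unc f)) : ContDiff ℝ (⊤ : ℕ∞) (unc (pdR f)) := by
  have : unc (pdR f) = fun p : ℝ × ℝ => fderiv ℝ (unc f) p (0, 1) := by
    funext p; exact pdR_eq hf p.1 p.2
  rw [this]; exact contDiff_unc_apply hf _

theorem smooth_pdtR (hf : ContDiff ℝ (⊤ : ℕ∞) (unc f)) : ContDiff ℝ (⊤ : ℕ∞) (unc (pdtR f)) := by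
  have : unc (pdtR f) = fun p : ℝ × ℝ => fderiv ℝ (unc f) p (1, 0) := by
    funext p; exact pdtR_eq hf p.1 p.2
  rw [this]; exact contDiff_unc_apply hf _

theorem clairaut (hf : ContDiff ℝ (⊤ : ℕ∞) (unc f)) (t x : ℝ) :
    pdtR (pdR f) t x = pdR (pdtR f) t x := by
  have hdf : ContDiff ℝ (⊤ : ℕ∞) (fderiv ℝ (unc f)) := hf.fderiv_right (by simp)
  have hsym : ∀ v w : ℝ × ℝ,
      fderiv ℝ (fderiv ℝ (unc f)) (t, x) v w = fderiv ℝ (fderiv ℝ (unc f)) (t, x) w v := by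
    intro v w
    exact second_derivative_symmetric
      (fun y => (hf.differentiable (by simp) y).hasFDerivAt)
      ((hdf.differentiable (by simp) (t, x)).hasFDerivAt) v w
  have key : ∀ v w : ℝ × ℝ,
      HasFDerivAt (fun p : ℝ × ℝ => fderiv ℝ (unc f) p w)
        ((fderiv ℝ (fderiv ℝ (unc f)) (t, x)).flip w) (t, x) := by
    intro v w
    have h := ((hdf.differentiable (by simp) (t, x)).hasFDerivAt).clm_apply
      (hasFDerivAt_const w (t, x))
    simpa using h
  -- pdtR (pdR f) t x
  have e1 : unc (pdR f) = fun p : ℝ × ℝ => fderiv ℝ (unc f) p (0, 1) := by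
    funext p; exact pdR_eq hf p.1 p.2
  have e2 : unc (pdtR f) = fun p : ℝ × ℝ => fderiv ℝ (unc f) p (1, 0) := by
    funext p; exact pdtR_eq hf p.1 p.2
  have h1 : pdtR (pdR f) t x = fderiv ℝ (unc (pdR f)) (t, x) (1, 0) :=
    pdtR_eq (smooth_pdR hf) t x
  have h2 : pdR (pdtR f) t x = fderiv ℝ (unc (pdtR f)) (t, x) (0, 1) :=
    pdR_eq (smooth_pdtR hf) t x
  rw [h1, h2, e1, e2, (key 0 (0,1)).fderiv, (key 0 (1,0)).fderiv]
  simp only [ContinuousLinearMap.flip_apply]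
  exact hsym (1,0) (0,1)


/-- decays in x faster than any polynomial, loc. unif. in t -/
def DecayT (g : ℝ → ℝ → ℝ) : Prop :=
  ∀ T : ℝ, ∀ k : ℕ, ∃ C : ℝ, ∀ t x : ℝ, |t| ≤ T → |x| ^ k * |g t x| ≤ C

/-- bounded loc. unif. in t -/
def BddT (h : ℝ → ℝ → ℝ) : Prop :=
  ∀ T : ℝ, ∃ C : ℝ, ∀ t x : ℝ, |t| ≤ T → |h t x| ≤ C

theorem DecayT.bddT {g} (hg : DecayT g) : BddT g := by
  intro T
  obtain ⟨C, hC⟩ := hg T 0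
  exact ⟨C, fun t x ht => by simpa using hC t x ht⟩

theorem DecayT.add {g h} (hg : DecayT g) (hh : DecayT h) :
    DecayT (fun t x => g t x + h t x) := by
  intro T k
  obtain ⟨C, hC⟩ := hg T k; obtain ⟨D, hD⟩ := hh T k
  refine ⟨C + D, fun t x ht => ?_⟩
  calc |x| ^ k * |g t x + h t x| ≤ |x| ^ k * (|g t x| + |h t x|) := by
        gcongr; exact abs_add_le _ _
    _ = |x| ^ k * |g t x| + |x| ^ k * |h t x| := by ring
    _ ≤ C + D := add_le_add (hC t x ht) (hD t x ht)

theorem BddT.mul_decay {h g} (hh : BddT h) (hg : DecayT g) :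
    DecayT (fun t x => h t x * g t x) := by
  intro T k
  obtain ⟨C, hC⟩ := hh T; obtain ⟨D, hD⟩ := hg T k
  refine ⟨max C 0 * max D 0, fun t x ht => ?_⟩
  have h1 : |h t x| ≤ max C 0 := le_trans (hC t x ht) (le_max_left _ _)
  have h2 : |x| ^ k * |g t x| ≤ max D 0 := le_trans (hD t x ht) (le_max_left _ _)
  calc |x| ^ k * |h t x * g t x| = |h t x| * (|x| ^ k * |g t x|) := by
        rw [abs_mul]; ring
    _ ≤ max C 0 * max D 0 :=
        mul_le_mul h1 h2 (by positivity) (le_max_right _ _)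

theorem DecayT.mul {g h} (hg : DecayT g) (hh : DecayT h) :
    DecayT (fun t x => g t x * h t x) := hg.bddT.mul_decay hh

theorem bddT_of_cont (h : ℝ → ℝ) (hc : Continuous h) : BddT (fun t _ => h t) := by
  intro T
  obtain ⟨C, hC⟩ := (isCompact_Icc (a := -T) (b := T)).exists_bound_of_continuousOn
    hc.continuousOn
  exact ⟨C, fun t x ht => by
    have := hC t (by rw [mem_Icc]; exact abs_le.mp ht); simpa using this⟩

theorem bddT_global (h : ℝ → ℝ → ℝ) (C : ℝ) (hb : ∀ t x, |h t x| ≤ C) : BddT h :=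
  fun _ => ⟨C, fun t x _ => hb t x⟩

theorem BddT.mul {g h} (hg : BddT g) (hh : BddT h) : BddT (fun t x => g t x * h t x) := by
  intro T
  obtain ⟨C, hC⟩ := hg T; obtain ⟨D, hD⟩ := hh T
  refine ⟨max C 0 * max D 0, fun t x ht => ?_⟩
  rw [abs_mul]
  exact mul_le_mul (le_trans (hC t x ht) (le_max_left _ _))
    (le_trans (hD t x ht) (le_max_left _ _)) (abs_nonneg _) (le_max_right _ _)

theorem DecayT.bmul {g} (hg : DecayT g) (c : ℝ) : DecayT (fun t x => c * g t x) :=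
  BddT.mul_decay (fun _ => ⟨|c|, fun _ _ _ => le_refl _⟩) hg

theorem DecayT.neg {g} (hg : DecayT g) : DecayT (fun t x => -g t x) := by
  have := hg.bmul (-1); simpa using this

theorem DecayT.sub {g h} (hg : DecayT g) (hh : DecayT h) :
    DecayT (fun t x => g t x - h t x) := by
  have := hg.add hh.neg; simpa [sub_eq_add_neg] using this

theorem DecayT.xmul {g} (hg : DecayT g) : DecayT (fun t x => x * g t x) := by
  intro T k
  obtain ⟨C, hC⟩ := hg T (k + 1)
  refine ⟨C, fun t x ht => ?_⟩
  calc |x| ^ k * |x * g t x| = |x| ^ (k + 1) * |g t x| := by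
        rw [abs_mul, pow_succ]; ring
    _ ≤ C := hC t x ht

/-- bound of the shape C/(1+x²) -/
theorem DecayT.bound_sq {g} (hg : DecayT g) (T : ℝ) :
    ∃ C : ℝ, 0 ≤ C ∧ ∀ t x : ℝ, |t| ≤ T → |g t x| ≤ C * (1 + x ^ 2)⁻¹ := by
  obtain ⟨C0, hC0⟩ := hg T 0
  obtain ⟨C2, hC2⟩ := hg T 2
  refine ⟨max (C0 + C2) 0, le_max_right _ _, fun t x ht => ?_⟩
  have h1 : (1 + x ^ 2) * |g t x| ≤ C0 + C2 := by
    have a0 := hC0 t x ht; have a2 := hC2 t x ht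
    have : x ^ 2 * |g t x| ≤ C2 := by
      have : |x| ^ 2 = x ^ 2 := sq_abs x
      linarith [a2, this ▸ a2]
    nlinarith [abs_nonneg (g t x), a0]
  calc |g t x| = ((1 + x ^ 2) * |g t x|) * (1 + x ^ 2)⁻¹ := by
        field_simp
    _ ≤ max (C0 + C2) 0 * (1 + x ^ 2)⁻¹ := by
        gcongr
        exact le_trans h1 (le_max_left _ _)

/-- integrability in x of a continuous decaying function -/
theorem DecayT.integrable {g} (hg : DecayT g) (t : ℝ)
    (hc : Continuous (fun x => g t x)) : Integrable (fun x => g t x) := by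
  obtain ⟨C, hC0, hC⟩ := hg.bound_sq |t|
  exact (integrable_inv_one_add_sq.const_mul C).mono' hc.aestronglyMeasurable
    (Filter.Eventually.of_forall fun x => by
      simpa [abs_of_nonneg (le_of_lt (by positivity : (0:ℝ) < (1 + x ^ 2)⁻¹)), abs_mul,
        abs_of_nonneg hC0] using hC t x le_rfl)

/-- decaying functions tend to 0 -/
theorem DecayT.tendsto_atTop {g} (hg : DecayT g) (t : ℝ) :
    Tendsto (fun x => g t x) atTop (nhds 0) := by
  obtain ⟨C, hC0, hC⟩ := hg.bound_sq |t|
  have hb : Tendsto (fun x : ℝ => C * (1 + x ^ 2)⁻¹) atTop (nhds 0) := by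
    rw [show (0:ℝ) = C * 0 by ring]
    exact tendsto_const_nhds.mul (tendsto_inv_atTop_zero.comp
      (tendsto_atTop_add_const_left _ 1 (tendsto_pow_atTop two_ne_zero)))
  exact squeeze_zero_norm (fun x => hC t x le_rfl) hb

theorem DecayT.tendsto_atBot {g} (hg : DecayT g) (t : ℝ) :
    Tendsto (fun x => g t x) atBot (nhds 0) := by
  obtain ⟨C, hC0, hC⟩ := hg.bound_sq |t|
  have hb : Tendsto (fun x : ℝ => C * (1 + x ^ 2)⁻¹) atBot (nhds 0) := by
    rw [show (0:ℝ) = C * 0 by ring]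
    refine tendsto_const_nhds.mul (tendsto_inv_atTop_zero.comp ?_)
    have h2 : Tendsto (fun x : ℝ => x ^ 2) atBot atTop := by
      have ha : Tendsto (fun x : ℝ => x ^ 2) atTop atTop :=
        tendsto_pow_atTop (two_ne_zero)
      have hb : Tendsto (fun x : ℝ => -x) atBot atTop := tendsto_neg_atBot_atTop
      have hc := ha.comp hb
      simpa [Function.comp_def, neg_sq] using hc
    exact tendsto_atTop_add_const_left _ 1 h2
  exact squeeze_zero_norm (fun x => hC t x le_rfl) hb


theorem schwartz_decayIter {f} (hf : SchwartzLocR f) (j l : ℕ) :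
    DecayT (pdR^[l] (pdtR^[j] f)) := fun T k => hf j k l T

theorem schwartz_decay {f} (hf : SchwartzLocR f) : DecayT f := by
  simpa using schwartz_decayIter hf 0 0

theorem schwartz_decay_pdR {f} (hf : SchwartzLocR f) : DecayT (pdR f) := by
  simpa using schwartz_decayIter hf 0 1

theorem schwartz_decay_pdtR {f} (hf : SchwartzLocR f) : DecayT (pdtR f) := by
  simpa using schwartz_decayIter hf 1 0

theorem schwartz_decay_pdR_pdtR {f} (hf : SchwartzLocR f) :
    DecayT (pdR (pdtR f)) := by
  simpa using schwartz_decayIter hf 1 1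

theorem schwartz_decay_pdtR_pdtR {f} (hf : SchwartzLocR f) :
    DecayT (pdtR (pdtR f)) := by
  simpa using schwartz_decayIter hf 2 0

theorem schwartz_decay_pdR_pdR {f} (hf : SchwartzLocR f) :
    DecayT (pdR (pdR f)) := by
  have := schwartz_decayIter hf 0 2
  simpa [Function.iterate_succ_apply'] using this

theorem schwartz_decay_pdtR_pdR {f} (hf : SchwartzLocR f)
    (hsm : ContDiff ℝ (⊤ : ℕ∞) (unc f)) : DecayT (pdtR (pdR f)) := by
  have h := schwartz_decay_pdR_pdtR hf
  intro T k
  obtain ⟨C, hC⟩ := h T k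
  exact ⟨C, fun t x ht => by rw [clairaut hsm]; exact hC t x ht⟩

theorem cont_in_x {g : ℝ → ℝ → ℝ} (hg : ContDiff ℝ (⊤ : ℕ∞) (unc g)) (t : ℝ) :
    Continuous fun x => g t x :=
  hg.continuous.comp (Continuous.prodMk_right t)

theorem bound_on_interval (h : ℝ → ℝ) (hc : Continuous h) (T : ℝ) :
    ∃ C : ℝ, ∀ s : ℝ, |s| ≤ T → |h s| ≤ C := by
  obtain ⟨C, hC⟩ := (isCompact_Icc (a := -T) (b := T)).exists_bound_of_continuousOn
    hc.continuousOn
  exact ⟨C, fun s hs => by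
    have := hC s (by rw [mem_Icc]; exact abs_le.mp hs)
    simpa using this⟩

theorem pos_lower_on_interval (h : ℝ → ℝ) (hc : Continuous h) (hp : ∀ s, 0 < h s)
    (T : ℝ) (hT : 0 ≤ T) : ∃ δ : ℝ, 0 < δ ∧ ∀ s : ℝ, |s| ≤ T → δ ≤ h s := by
  obtain ⟨s0, hs0, hmin⟩ := (isCompact_Icc (a := -T) (b := T)).exists_isMinOn
    ⟨0, by rw [mem_Icc]; constructor <;> linarith⟩ hc.continuousOn
  exact ⟨h s0, hp s0, fun s hs => hmin (by rw [mem_Icc]; exact abs_le.mp hs)⟩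

theorem integral_deriv_eq_zero'' {P P' : ℝ → ℝ}
    (hP : ∀ x, HasDerivAt P (P' x) x)
    (hint : Integrable P')
    (htop : Tendsto P atTop (nhds 0)) (hbot : Tendsto P atBot (nhds 0)) :
    (∫ x : ℝ, P' x) = 0 := by
  have h1 : ∀ R : ℝ, ∫ x in (-R)..R, P' x = P R - P (-R) := fun R =>
    intervalIntegral.integral_eq_sub_of_hasDerivAt (fun x _ => hP x)
      hint.intervalIntegrable
  have h2 : Tendsto (fun R : ℝ => ∫ x in (-R)..R, P' x) atTop (nhds (∫ x : ℝ, P' x)) :=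
    intervalIntegral_tendsto_integral hint tendsto_neg_atTop_atBot tendsto_id
  have h3 : Tendsto (fun R : ℝ => P R - P (-R)) atTop (nhds 0) := by
    simpa using htop.sub (hbot.comp tendsto_neg_atTop_atBot)
  have h4 : Tendsto (fun R : ℝ => P R - P (-R)) atTop (nhds (∫ x : ℝ, P' x)) := by
    simpa only [h1] using h2
  exact tendsto_nhds_unique h4 h3

theorem DecayT.congr {g h : ℝ → ℝ → ℝ} (hg : DecayT g) (e : ∀ t x, g t x = h t x) :
    DecayT h := by
  intro T k
  obtain ⟨C, hC⟩ := hg T k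
  exact ⟨C, fun t x ht => by rw [← e]; exact hC t x ht⟩

theorem hasDerivAt_pdx {g : ℝ → ℝ → ℝ} (hg : ContDiff ℝ (⊤ : ℕ∞) (unc g)) (t x : ℝ) :
    HasDerivAt (fun y => g t y) (pdR g t x) x := by
  rw [pdR_eq hg]; exact hasDerivAt_x hg t x

theorem hasDerivAt_pdt {g : ℝ → ℝ → ℝ} (hg : ContDiff ℝ (⊤ : ℕ∞) (unc g)) (t x : ℝ) :
    HasDerivAt (fun s => g s x) (pdtR g t x) t := by
  rw [pdtR_eq hg]; exact hasDerivAt_t hg t x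

section Main

variable (u n v : ℝ → ℝ → ℝ)

/-- localized energy density -/
def Gf : ℝ → ℝ → ℝ := fun t x =>
  (pdR u t x) ^ 2 + (u t x) ^ 2 + (pdtR u t x) ^ 2
    + (1/2) * (v t x) ^ 2 + (1/2) * (n t x) ^ 2 + n t x * (u t x) ^ 2

/-- flux density -/
def Hf : ℝ → ℝ → ℝ := fun t x =>
  (1/2) * (v t x * n t x) + (1/2) * (v t x * (u t x) ^ 2) - pdtR u t x * pdR u t x

/-- time derivative of the energy density -/
def Gtf : ℝ → ℝ → ℝ := fun t x =>
  2 * pdR u t x * pdR (pdtR u) t x + 2 * u t x * pdtR u t x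
    + 2 * pdtR u t x * pdtR (pdtR u) t x + v t x * pdtR v t x
    + n t x * pdtR n t x + pdtR n t x * (u t x) ^ 2
    + 2 * n t x * u t x * pdtR u t x

variable {u n v}

theorem smooth_G (hsol : IsKGZSolution u n v) : ContDiff ℝ (⊤ : ℕ∞) (unc (Gf u n v)) := by
  have hu : ContDiff ℝ (⊤ : ℕ∞) (unc u) := hsol.smooth_u
  have hn : ContDiff ℝ (⊤ : ℕ∞) (unc n) := hsol.smooth_n
  have hv : ContDiff ℝ (⊤ : ℕ∞) (unc v) := hsol.smooth_v
  have h1 := smooth_pdR hu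
  have h2 := smooth_pdtR hu
  exact ((((((h1.pow 2).add (hu.pow 2)).add (h2.pow 2)).add
    (contDiff_const.mul (hv.pow 2))).add (contDiff_const.mul (hn.pow 2))).add
    (hn.mul (hu.pow 2)))

theorem smooth_H (hsol : IsKGZSolution u n v) : ContDiff ℝ (⊤ : ℕ∞) (unc (Hf u n v)) := by
  have hu : ContDiff ℝ (⊤ : ℕ∞) (unc u) := hsol.smooth_u
  have hn : ContDiff ℝ (⊤ : ℕ∞) (unc n) := hsol.smooth_n
  have hv : ContDiff ℝ (⊤ : ℕ∞) (unc v) := hsol.smooth_v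
  exact ((contDiff_const.mul (hv.mul hn)).add
    (contDiff_const.mul (hv.mul (hu.pow 2)))).sub
    ((smooth_pdtR hu).mul (smooth_pdR hu))

theorem decay_G (hsol : IsKGZSolution u n v) : DecayT (Gf u n v) := by
  have du := schwartz_decay hsol.schwartz_u
  have dn := schwartz_decay hsol.schwartz_n
  have dv := schwartz_decay hsol.schwartz_v
  have dux := schwartz_decay_pdR hsol.schwartz_u
  have dut := schwartz_decay_pdtR hsol.schwartz_u
  refine DecayT.congr ((((((dux.mul dux).add (du.mul du)).add (dut.mul dut)).add
    ((dv.mul dv).bmul (1/2))).add ((dn.mul dn).bmul (1/2))).add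
    (dn.mul (du.mul du))) (fun t x => ?_)
  simp only [Gf]; ring

theorem decay_H (hsol : IsKGZSolution u n v) : DecayT (Hf u n v) := by
  have du := schwartz_decay hsol.schwartz_u
  have dn := schwartz_decay hsol.schwartz_n
  have dv := schwartz_decay hsol.schwartz_v
  have dux := schwartz_decay_pdR hsol.schwartz_u
  have dut := schwartz_decay_pdtR hsol.schwartz_u
  refine DecayT.congr (((((dv.mul dn).bmul (1/2)).add
    ((dv.mul (du.mul du)).bmul (1/2))).sub (dut.mul dux))) (fun t x => ?_)
  simp only [Hf]; ring

theorem decay_Gt (hsol : IsKGZSolution u n v) : DecayT (Gtf u n v) := by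
  have du := schwartz_decay hsol.schwartz_u
  have dn := schwartz_decay hsol.schwartz_n
  have dv := schwartz_decay hsol.schwartz_v
  have dux := schwartz_decay_pdR hsol.schwartz_u
  have dut := schwartz_decay_pdtR hsol.schwartz_u
  have dnt := schwartz_decay_pdtR hsol.schwartz_n
  have dvt := schwartz_decay_pdtR hsol.schwartz_v
  have duxt := schwartz_decay_pdR_pdtR hsol.schwartz_u
  have dutt := schwartz_decay_pdtR_pdtR hsol.schwartz_u
  refine DecayT.congr (((((((((dux.mul duxt).bmul 2).add ((du.mul dut).bmul 2)).add
    ((dut.mul dutt).bmul 2)).add (dv.mul dvt)).add (dn.mul dnt)).add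
    (dnt.mul (du.mul du))).add (((dn.mul du).mul dut).bmul 2))) (fun t x => ?_)
  simp only [Gtf]; ring

theorem pdR_H (hsol : IsKGZSolution u n v) (t x : ℝ) :
    pdR (Hf u n v) t x =
      (1/2) * (pdR v t x * n t x + v t x * pdR n t x)
        + (1/2) * (pdR v t x * (u t x) ^ 2 + v t x * (2 * u t x * pdR u t x))
        - (pdR (pdtR u) t x * pdR u t x + pdtR u t x * pdR (pdR u) t x) := by
  have hu := hsol.smooth_u
  have h1 := hasDerivAt_pdx hu t x
  have h2 := hasDerivAt_pdx hsol.smooth_n t x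
  have h3 := hasDerivAt_pdx hsol.smooth_v t x
  have h4 := hasDerivAt_pdx (smooth_pdtR hu) t x
  have h5 := hasDerivAt_pdx (smooth_pdR hu) t x
  have hbuilt := (((h3.mul h2).const_mul ((1:ℝ)/2)).add
    ((h3.mul (h1.pow 2)).const_mul ((1:ℝ)/2))).sub (h4.mul h5)
  have e : pdR (Hf u n v) t x
      = deriv (fun y => (1:ℝ)/2 * (v t y * n t y) + 1/2 * (v t y * u t y ^ 2)
          - pdtR u t y * pdR u t y) x := rfl
  rw [e]; convert hbuilt.deriv using 1; · rfl
  simp only [Pi.pow_apply]; push_cast; ring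

theorem Gt_eq_neg_two_pdR_H (hsol : IsKGZSolution u n v) (t x : ℝ) :
    Gtf u n v t x = -2 * pdR (Hf u n v) t x := by
  have hx : pdR (fun s y => n s y + u s y ^ 2) t x
      = pdR n t x + 2 * u t x * pdR u t x := by
    have h := (hasDerivAt_pdx hsol.smooth_n t x).add
      ((hasDerivAt_pdx hsol.smooth_u t x).pow 2)
    have e : pdR (fun s y => n s y + u s y ^ 2) t x
        = deriv (fun y => n t y + u t y ^ 2) x := rfl
    rw [e]; convert h.deriv using 1; · rfl
    push_cast; ring
  have hvt : pdtR v t x = -(pdR n t x + 2 * u t x * pdR u t x) := by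
    have h := hsol.eq_v t x; rw [hx] at h; linarith
  have hnt : pdtR n t x = -pdR v t x := by linarith [hsol.eq_n t x]
  have hutt : pdtR (pdtR u) t x = pdR (pdR u) t x - u t x - n t x * u t x := by
    linarith [hsol.eq_u t x]
  rw [pdR_H hsol t x]
  simp only [Gtf]
  rw [hvt, hnt, hutt]; ring

theorem smooth_Gt (hsol : IsKGZSolution u n v) : ContDiff ℝ (⊤ : ℕ∞) (unc (Gtf u n v)) := by
  have hu : ContDiff ℝ (⊤ : ℕ∞) (unc u) := hsol.smooth_u
  have hn : ContDiff ℝ (⊤ : ℕ∞) (unc n) := hsol.smooth_n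
  have hv : ContDiff ℝ (⊤ : ℕ∞) (unc v) := hsol.smooth_v
  exact (((((((contDiff_const.mul (smooth_pdR hu)).mul
    (smooth_pdR (smooth_pdtR hu))).add
    ((contDiff_const.mul hu).mul (smooth_pdtR hu))).add
    ((contDiff_const.mul (smooth_pdtR hu)).mul (smooth_pdtR (smooth_pdtR hu)))).add
    (hv.mul (smooth_pdtR hv))).add (hn.mul (smooth_pdtR hn))).add
    ((smooth_pdtR hn).mul (hu.pow 2))).add
    (((contDiff_const.mul hn).mul hu).mul (smooth_pdtR hu))

/-- rescaled space variable -/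
def Xf (lam mu : ℝ → ℝ) : ℝ → ℝ → ℝ := fun t x => (x + mu t) / lam t

/-- the t-derivative of the localized energy density -/
def Df (u n v : ℝ → ℝ → ℝ) (lam mu φ : ℝ → ℝ) : ℝ → ℝ → ℝ := fun t x =>
  deriv φ (Xf lam mu t x)
      * ((deriv mu t * lam t - (x + mu t) * deriv lam t) / (lam t) ^ 2) * Gf u n v t x
    + φ (Xf lam mu t x) * Gtf u n v t x

variable {lam mu φ : ℝ → ℝ}

theorem hasDeriv_G_t (hsol : IsKGZSolution u n v) (t x : ℝ) :
    HasDerivAt (fun s => Gf u n v s x) (Gtf u n v t x) t := by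
  have hu := hsol.smooth_u
  have g1 := hasDerivAt_pdt (smooth_pdR hu) t x
  have g2 := hasDerivAt_pdt hu t x
  have g3 := hasDerivAt_pdt (smooth_pdtR hu) t x
  have g4 := hasDerivAt_pdt hsol.smooth_v t x
  have g5 := hasDerivAt_pdt hsol.smooth_n t x
  have hb := (((((g1.pow 2).add (g2.pow 2)).add (g3.pow 2)).add
    ((g4.pow 2).const_mul ((1:ℝ)/2))).add ((g5.pow 2).const_mul ((1:ℝ)/2))).add
    (g5.mul (g2.pow 2))
  refine HasDerivAt.congr_deriv hb ?_
  simp only [Gtf, Pi.pow_apply]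
  rw [← clairaut hu t x]
  push_cast; ring

theorem hasDeriv_F (hsol : IsKGZSolution u n v) (hφ : ContDiff ℝ 2 φ)
    (hlamC1 : ContDiff ℝ 1 lam) (hμC1 : ContDiff ℝ 1 mu)
    (hlampos : ∀ t : ℝ, 0 < lam t) (t x : ℝ) :
    HasDerivAt (fun s => φ (Xf lam mu s x) * Gf u n v s x)
      (Df u n v lam mu φ t x) t := by
  have hμd : HasDerivAt mu (deriv mu t) t :=
    (hμC1.differentiable one_ne_zero t).hasDerivAt
  have hlamd : HasDerivAt lam (deriv lam t) t :=
    (hlamC1.differentiable one_ne_zero t).hasDerivAt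
  have hXd : HasDerivAt (fun s => (x + mu s) / lam s)
      ((deriv mu t * lam t - (x + mu t) * deriv lam t) / (lam t) ^ 2) t := by
    have h := ((hasDerivAt_const t x).add hμd).div hlamd (ne_of_gt (hlampos t))
    simp at h; exact h
  have hφd : HasDerivAt φ (deriv φ (Xf lam mu t x)) (Xf lam mu t x) :=
    ((hφ.differentiable two_ne_zero) _).hasDerivAt
  have hcomp : HasDerivAt (fun s => φ (Xf lam mu s x))
      (deriv φ (Xf lam mu t x)
        * ((deriv mu t * lam t - (x + mu t) * deriv lam t) / (lam t) ^ 2)) t :=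
    hφd.comp t hXd
  exact hcomp.mul (hasDeriv_G_t hsol t x)

theorem decay_pdR_H (hsol : IsKGZSolution u n v) : DecayT (pdR (Hf u n v)) := by
  have du := schwartz_decay hsol.schwartz_u
  have dn := schwartz_decay hsol.schwartz_n
  have dv := schwartz_decay hsol.schwartz_v
  have dux := schwartz_decay_pdR hsol.schwartz_u
  have dut := schwartz_decay_pdtR hsol.schwartz_u
  have dnx := schwartz_decay_pdR hsol.schwartz_n
  have dvx := schwartz_decay_pdR hsol.schwartz_v
  have duxt := schwartz_decay_pdR_pdtR hsol.schwartz_u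
  have duxx := schwartz_decay_pdR_pdR hsol.schwartz_u
  refine DecayT.congr (((((dvx.mul dn).add (dv.mul dnx)).bmul (1/2)).add
    (((dvx.mul (du.mul du)).add ((dv.mul ((du.mul dux).bmul 2)))).bmul (1/2))).sub
    ((duxt.mul dux).add (dut.mul duxx))) (fun t x => ?_)
  rw [pdR_H hsol t x]; ring

theorem decay_Df (hsol : IsKGZSolution u n v)
    (hlamC1 : ContDiff ℝ 1 lam) (hμC1 : ContDiff ℝ 1 mu)
    (hlampos : ∀ t : ℝ, 0 < lam t)
    (C0 C1 : ℝ) (hC0 : ∀ y, |φ y| ≤ C0) (hC1 : ∀ y, |deriv φ y| ≤ C1) :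
    DecayT (Df u n v lam mu φ) := by
  have hG := decay_G hsol
  have hGt := decay_Gt hsol
  have bφ' : BddT (fun t x => deriv φ (Xf lam mu t x)) :=
    bddT_global _ C1 (fun t x => hC1 _)
  have bφ : BddT (fun t x => φ (Xf lam mu t x)) :=
    bddT_global _ C0 (fun t x => hC0 _)
  have hlamne : ∀ t, (lam t) ^ 2 ≠ 0 := fun t => pow_ne_zero 2 (ne_of_gt (hlampos t))
  have c1 : Continuous fun t => deriv mu t * lam t / lam t ^ 2 :=
    ((hμC1.continuous_deriv le_rfl).mul hlamC1.continuous).div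
      (hlamC1.continuous.pow 2) hlamne
  have c2 : Continuous fun t => deriv lam t / lam t ^ 2 :=
    (hlamC1.continuous_deriv le_rfl).div (hlamC1.continuous.pow 2) hlamne
  have c3 : Continuous fun t => mu t * deriv lam t / lam t ^ 2 :=
    (hμC1.continuous.mul (hlamC1.continuous_deriv le_rfl)).div
      (hlamC1.continuous.pow 2) hlamne
  have b1 := bddT_of_cont _ c1
  have b2 := bddT_of_cont _ c2
  have b3 := bddT_of_cont _ c3
  have inner : DecayT (fun t x =>
      deriv mu t * lam t / lam t ^ 2 * Gf u n v t x
        - deriv lam t / lam t ^ 2 * (x * Gf u n v t x)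
        - mu t * deriv lam t / lam t ^ 2 * Gf u n v t x) :=
    ((b1.mul_decay hG).sub (b2.mul_decay hG.xmul)).sub (b3.mul_decay hG)
  refine DecayT.congr ((bφ'.mul_decay inner).add (bφ.mul_decay hGt)) (fun t x => ?_)
  simp only [Df]
  have h2 : (lam t) ^ 2 ≠ 0 := hlamne t
  field_simp
  ring

theorem integral_ibp (hsol : IsKGZSolution u n v) (hφ : ContDiff ℝ 2 φ)
    (C0 C1 : ℝ) (hC0 : ∀ y, |φ y| ≤ C0) (hC1 : ∀ y, |deriv φ y| ≤ C1)
    (hlamC1 : ContDiff ℝ 1 lam) (hμC1 : ContDiff ℝ 1 mu)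
    (hlampos : ∀ s : ℝ, 0 < lam s) (t : ℝ) :
    (∫ x : ℝ, φ (Xf lam mu t x) * pdR (Hf u n v) t x)
      = -((1 / lam t) * ∫ x : ℝ, deriv φ (Xf lam mu t x) * Hf u n v t x) := by
  have hXx : ∀ x : ℝ, HasDerivAt (fun y => Xf lam mu t y) (1 / lam t) x := by
    intro x
    have h := ((hasDerivAt_id x).add_const (mu t)).div_const (lam t)
    simpa [Xf] using h
  have hφd : ∀ z : ℝ, HasDerivAt φ (deriv φ z) z := fun z =>
    ((hφ.differentiable two_ne_zero) z).hasDerivAt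
  have hP : ∀ x : ℝ, HasDerivAt (fun y => φ (Xf lam mu t y) * Hf u n v t y)
      (deriv φ (Xf lam mu t x) * (1 / lam t) * Hf u n v t x
        + φ (Xf lam mu t x) * pdR (Hf u n v) t x) x := fun x =>
    ((hφd _).comp x (hXx x)).mul (hasDerivAt_pdx (smooth_H hsol) t x)
  have hXc : Continuous fun x : ℝ => Xf lam mu t x :=
    (continuous_id.add continuous_const).div_const _
  have hHc : Continuous fun x => Hf u n v t x := cont_in_x (smooth_H hsol) t
  have hpHc : Continuous fun x => pdR (Hf u n v) t x :=
    cont_in_x (smooth_pdR (smooth_H hsol)) t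
  have bφ : BddT (fun s x => φ (Xf lam mu s x)) := bddT_global _ C0 fun s x => hC0 _
  have bφ' : BddT (fun s x => deriv φ (Xf lam mu s x)) :=
    bddT_global _ C1 fun s x => hC1 _
  have binv : BddT (fun s : ℝ => fun _ : ℝ => 1 / lam s) :=
    bddT_of_cont _ (continuous_const.div hlamC1.continuous fun s => ne_of_gt (hlampos s))
  have d1 : DecayT (fun s x => deriv φ (Xf lam mu s x) * (1 / lam s) * Hf u n v s x) :=
    (bφ'.mul binv).mul_decay (decay_H hsol)
  have i1 : Integrable (fun x => deriv φ (Xf lam mu t x) * (1 / lam t) * Hf u n v t x) :=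
    d1.integrable t
      ((((hφ.continuous_deriv one_le_two).comp hXc).mul continuous_const).mul hHc)
  have d2 : DecayT (fun s x => φ (Xf lam mu s x) * pdR (Hf u n v) s x) :=
    bφ.mul_decay (decay_pdR_H hsol)
  have i2 : Integrable (fun x => φ (Xf lam mu t x) * pdR (Hf u n v) t x) :=
    d2.integrable t ((hφ.continuous.comp hXc).mul hpHc)
  have dP : DecayT (fun s x => φ (Xf lam mu s x) * Hf u n v s x) :=
    bφ.mul_decay (decay_H hsol)
  have hzero := integral_deriv_eq_zero'' hP (i1.add i2)
    (dP.tendsto_atTop t) (dP.tendsto_atBot t)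
  rw [integral_add i1 i2] at hzero
  have e : (fun x => deriv φ (Xf lam mu t x) * (1 / lam t) * Hf u n v t x)
      = fun x => (1 / lam t) * (deriv φ (Xf lam mu t x) * Hf u n v t x) := by
    funext x; ring
  rw [e, integral_const_mul] at hzero
  linarith

end Main

end KGZaux

open KGZaux

/-- time-dependent virial identity for the localized energy
`J(t) = ½∫φ((x+μ)/λ)((∂ₓu)² + u² + (∂ₜu)² + ½v² + ½n² + nu²)`
of the Klein–Gordon–Zakharov system. -/
theorem kgz_time_dependent_energy_virial
    (u n v : ℝ → ℝ → ℝ)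
    (hsol : IsKGZSolution u n v)
    (φ : ℝ → ℝ) (hφ : ContDiff ℝ 2 φ)
    (hφbdd : ∀ k ≤ 2, ∃ C : ℝ, ∀ x : ℝ, |iteratedDeriv k φ x| ≤ C)
    (lam μ : ℝ → ℝ) (hlamC1 : ContDiff ℝ 1 lam) (hμC1 : ContDiff ℝ 1 μ)
    (hlampos : ∀ t : ℝ, 0 < lam t) :
    ∀ t : ℝ, HasDerivAt
      (fun s => (1/2) * ∫ x : ℝ, φ ((x + μ s) / lam s)
          * ((pdR u s x) ^ 2 + (u s x) ^ 2 + (pdtR u s x) ^ 2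
            + (1/2) * (v s x) ^ 2 + (1/2) * (n s x) ^ 2 + n s x * (u s x) ^ 2))
      ((1 / lam t) * (∫ x : ℝ, deriv φ ((x + μ t) / lam t)
            * ((1/2) * (v t x * n t x) + (1/2) * (v t x * (u t x) ^ 2)
              - pdtR u t x * pdR u t x))
        + (deriv μ t / (2 * lam t))
            * (∫ x : ℝ, deriv φ ((x + μ t) / lam t)
                * ((pdR u t x) ^ 2 + (u t x) ^ 2 + (pdtR u t x) ^ 2
                  + (1/2) * (v t x) ^ 2 + (1/2) * (n t x) ^ 2
                  + n t x * (u t x) ^ 2))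
        - (deriv lam t / (2 * lam t))
            * (∫ x : ℝ, deriv φ ((x + μ t) / lam t) * ((x + μ t) / lam t)
                * ((pdR u t x) ^ 2 + (u t x) ^ 2 + (pdtR u t x) ^ 2
                  + (1/2) * (v t x) ^ 2 + (1/2) * (n t x) ^ 2
                  + n t x * (u t x) ^ 2))) t := by
  intro t
  obtain ⟨C0, hC0⟩ := hφbdd 0 (by norm_num)
  obtain ⟨C1, hC1⟩ := hφbdd 1 (by norm_num)
  simp only [iteratedDeriv_zero] at hC0
  simp only [iteratedDeriv_one] at hC1
  have hlamne : lam t ≠ 0 := ne_of_gt (hlampos t)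
  -- continuity bits
  have hXc : ∀ s : ℝ, Continuous fun x : ℝ => Xf lam μ s x := fun s =>
    (continuous_id.add continuous_const).div_const _
  have hGc : ∀ s : ℝ, Continuous fun x => Gf u n v s x := fun s =>
    cont_in_x (smooth_G hsol) s
  have hGtc : Continuous fun x => Gtf u n v t x := cont_in_x (smooth_Gt hsol) t
  have bφ : BddT (fun s x => φ (Xf lam μ s x)) := bddT_global _ C0 fun s x => hC0 _
  have bφ' : BddT (fun s x => deriv φ (Xf lam μ s x)) :=
    bddT_global _ C1 fun s x => hC1 _
  -- dominated convergence
  obtain ⟨K, hK0, hK⟩ :=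
    (decay_Df hsol hlamC1 hμC1 hlampos C0 C1 hC0 hC1).bound_sq (|t| + 1)
  have hF_meas : ∀ᶠ s in nhds t, AEStronglyMeasurable
      (fun x => φ (Xf lam μ s x) * Gf u n v s x) volume :=
    Filter.Eventually.of_forall fun s =>
      ((hφ.continuous.comp (hXc s)).mul (hGc s)).aestronglyMeasurable
  have hF_int : Integrable (fun x => φ (Xf lam μ t x) * Gf u n v t x) :=
    (bφ.mul_decay (decay_G hsol)).integrable t
      ((hφ.continuous.comp (hXc t)).mul (hGc t))
  have hF'_meas : AEStronglyMeasurable (Df u n v lam μ φ t) volume := by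
    have contq : Continuous fun x : ℝ =>
        (deriv μ t * lam t - (x + μ t) * deriv lam t) / (lam t) ^ 2 :=
      (continuous_const.sub ((continuous_id.add continuous_const).mul
        continuous_const)).div_const _
    have cDf : Continuous fun x => Df u n v lam μ φ t x :=
      ((((hφ.continuous_deriv one_le_two).comp (hXc t)).mul contq).mul (hGc t)).add
        ((hφ.continuous.comp (hXc t)).mul hGtc)
    exact cDf.aestronglyMeasurable
  have h_bound : ∀ᵐ x : ℝ, ∀ s ∈ Metric.ball t 1,
      ‖Df u n v lam μ φ s x‖ ≤ K * (1 + x ^ 2)⁻¹ := by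
    filter_upwards with x
    intro s hs
    rw [Metric.mem_ball, Real.dist_eq] at hs
    have hsT : |s| ≤ |t| + 1 := by
      calc |s| = |t + (s - t)| := by ring_nf
        _ ≤ |t| + |s - t| := abs_add_le _ _
        _ ≤ |t| + 1 := by linarith
    rw [Real.norm_eq_abs]
    exact hK s x hsT
  have bound_int : Integrable (fun x : ℝ => K * (1 + x ^ 2)⁻¹) :=
    integrable_inv_one_add_sq.const_mul K
  have h_diff : ∀ᵐ x : ℝ, ∀ s ∈ Metric.ball t 1,
      HasDerivAt (fun s' => φ (Xf lam μ s' x) * Gf u n v s' x)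
        (Df u n v lam μ φ s x) s :=
    Filter.Eventually.of_forall fun x s _ =>
      hasDeriv_F hsol hφ hlamC1 hμC1 hlampos s x
  have key := hasDerivAt_integral_of_dominated_loc_of_deriv_le (Metric.ball_mem_nhds t one_pos)
    hF_meas hF_int hF'_meas h_bound bound_int h_diff
  have final := HasDerivAt.const_mul ((1:ℝ)/2) key.2
  -- rewrite the derivative value
  have e1 : (∫ x : ℝ, deriv φ ((x + μ t) / lam t)
        * ((1/2) * (v t x * n t x) + (1/2) * (v t x * (u t x) ^ 2)
          - pdtR u t x * pdR u t x))
      = ∫ x : ℝ, deriv φ (Xf lam μ t x) * Hf u n v t x := rfl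
  have e2 : (∫ x : ℝ, deriv φ ((x + μ t) / lam t)
        * ((pdR u t x) ^ 2 + (u t x) ^ 2 + (pdtR u t x) ^ 2
          + (1/2) * (v t x) ^ 2 + (1/2) * (n t x) ^ 2 + n t x * (u t x) ^ 2))
      = ∫ x : ℝ, deriv φ (Xf lam μ t x) * Gf u n v t x := rfl
  have e3 : (∫ x : ℝ, deriv φ ((x + μ t) / lam t) * ((x + μ t) / lam t)
        * ((pdR u t x) ^ 2 + (u t x) ^ 2 + (pdtR u t x) ^ 2
          + (1/2) * (v t x) ^ 2 + (1/2) * (n t x) ^ 2 + n t x * (u t x) ^ 2))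
      = ∫ x : ℝ, deriv φ (Xf lam μ t x) * Xf lam μ t x * Gf u n v t x := rfl
  rw [e1, e2, e3]
  -- split the integral of Df
  have binv : BddT (fun s : ℝ => fun _ : ℝ => 1 / lam s) :=
    bddT_of_cont _ (continuous_const.div hlamC1.continuous fun s => ne_of_gt (hlampos s))
  have bmudivlam : BddT (fun s : ℝ => fun _ : ℝ => μ s / lam s) :=
    bddT_of_cont _ (hμC1.continuous.div hlamC1.continuous fun s => ne_of_gt (hlampos s))
  have dXG : DecayT (fun s x => Xf lam μ s x * Gf u n v s x) := by
    refine DecayT.congr ((binv.mul_decay (decay_G hsol).xmul).add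
      (bmudivlam.mul_decay (decay_G hsol))) (fun s x => ?_)
    simp only [Xf]; ring
  have ia : Integrable (fun x => deriv φ (Xf lam μ t x) * Gf u n v t x) :=
    (bφ'.mul_decay (decay_G hsol)).integrable t
      (((hφ.continuous_deriv one_le_two).comp (hXc t)).mul (hGc t))
  have db : DecayT (fun s x => deriv φ (Xf lam μ s x) * Xf lam μ s x * Gf u n v s x) :=
    DecayT.congr (bφ'.mul_decay dXG) (fun s x => by ring)
  have ib : Integrable (fun x => deriv φ (Xf lam μ t x) * Xf lam μ t x * Gf u n v t x) :=
    db.integrable t ((((hφ.continuous_deriv one_le_two).comp (hXc t)).mul (hXc t)).mul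
      (hGc t))
  have ic : Integrable (fun x => φ (Xf lam μ t x) * pdR (Hf u n v) t x) :=
    (bφ.mul_decay (decay_pdR_H hsol)).integrable t
      ((hφ.continuous.comp (hXc t)).mul (cont_in_x (smooth_pdR (smooth_H hsol)) t))
  have hsplit : (fun x => Df u n v lam μ φ t x) = fun x =>
      ((deriv μ t / lam t) * (deriv φ (Xf lam μ t x) * Gf u n v t x)
        - (deriv lam t / lam t)
            * (deriv φ (Xf lam μ t x) * Xf lam μ t x * Gf u n v t x))
        + (-2) * (φ (Xf lam μ t x) * pdR (Hf u n v) t x) := by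
    funext x
    simp only [Df]
    rw [Gt_eq_neg_two_pdR_H hsol t x]
    simp only [Xf]
    field_simp
  have hint : (∫ x : ℝ, Df u n v lam μ φ t x)
      = (deriv μ t / lam t) * (∫ x : ℝ, deriv φ (Xf lam μ t x) * Gf u n v t x)
        - (deriv lam t / lam t)
            * (∫ x : ℝ, deriv φ (Xf lam μ t x) * Xf lam μ t x * Gf u n v t x)
        + (-2) * (∫ x : ℝ, φ (Xf lam μ t x) * pdR (Hf u n v) t x) := by
    rw [show (∫ x : ℝ, Df u n v lam μ φ t x) = ∫ x : ℝ,
        (((deriv μ t / lam t) * (deriv φ (Xf lam μ t x) * Gf u n v t x)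
          - (deriv lam t / lam t)
              * (deriv φ (Xf lam μ t x) * Xf lam μ t x * Gf u n v t x))
          + (-2) * (φ (Xf lam μ t x) * pdR (Hf u n v) t x)) from by rw [hsplit]]
    have h1 : Integrable (fun x => deriv μ t / lam t
        * (deriv φ (Xf lam μ t x) * Gf u n v t x)) volume := ia.const_mul _
    have h2 : Integrable (fun x => deriv lam t / lam t
        * (deriv φ (Xf lam μ t x) * Xf lam μ t x * Gf u n v t x)) volume :=
      ib.const_mul _
    have h3 : Integrable (fun x => (-2 : ℝ)
        * (φ (Xf lam μ t x) * pdR (Hf u n v) t x)) volume := ic.const_mul _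
    have h12 : Integrable (fun x => deriv μ t / lam t
        * (deriv φ (Xf lam μ t x) * Gf u n v t x)
        - deriv lam t / lam t
            * (deriv φ (Xf lam μ t x) * Xf lam μ t x * Gf u n v t x)) volume :=
      h1.sub h2
    rw [integral_add h12 h3, integral_sub h1 h2,
      integral_const_mul, integral_const_mul, integral_const_mul]
  have hibp := integral_ibp hsol hφ C0 C1 hC0 hC1 hlamC1 hμC1 hlampos t
  have heq : (1 / lam t) * (∫ x : ℝ, deriv φ (Xf lam μ t x) * Hf u n v t x)
        + (deriv μ t / (2 * lam t))
            * (∫ x : ℝ, deriv φ (Xf lam μ t x) * Gf u n v t x)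
        - (deriv lam t / (2 * lam t))
            * (∫ x : ℝ, deriv φ (Xf lam μ t x) * Xf lam μ t x * Gf u n v t x)
      = (1:ℝ)/2 * ∫ x : ℝ, Df u n v lam μ φ t x := by
    rw [hint, hibp]
    field_simp
    ring
  rw [heq]
  exact final
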